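/- Let ζ = exp(πi/n). For J = (j_1, …, j_n) ∈ I_n (i.e. −m ≤ j_1 < ⋯ < j_n ≤ 3m+1 integers when n = 2m+1, or half-integers in [−m+½, 3m−½] when n = 2m, with ζ^{j_k} ≠ −ζ^{j_l} for k ≠ l), the product ∏_k ζ^{j_k} equals 1 or −1. -/

import Mathlib

/-!
Write `z k = exp (π i j_k / n)`. Since the `j_k` lie in a half-open window of length `2n`,
the `z k` are distinct, and by hypothesis `z k ≠ -z l`, so the squares `z k ^ 2` are `n`
distinct numbers. In both parities `j_k ≡ (n + 1) / 2 (mod 1)`, whence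
`(z k ^ 2) ^ n = exp (2π i j_k) = (-1) ^ (n + 1)`: the squares are all the roots of
`X ^ n - (-1) ^ (n + 1)`, so their product is `(-1) ^ (n + 1) * (-1) ^ (n + 1) = 1`.
Hence `(∏ k, z k) ^ 2 = 1`.
-/

open Finset Polynomial Complex
open Real (pi)

theorem prod_eq_neg_one_pow_mul_of_injective_of_pow_card_eq {R ι : Type*} [CommRing R] [IsDomain R]
    [Fintype ι] [Nonempty ι] {w : ι → R} (hw : Function.Injective w) {c : R}
    (hc : ∀ i, w i ^ Fintype.card ι = c) :
    ∏ i, w i = (-1) ^ (Fintype.card ι + 1) * c := by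
  set n := Fintype.card ι
  have hn : n ≠ 0 := Fintype.card_ne_zero
  have hdeg : (X ^ n - C c).natDegree = n := natDegree_X_pow_sub_C
  have hroots : univ.val.map w = (X ^ n - C c).roots := by
    refine Multiset.eq_of_le_of_card_le ?_ ?_
    · refine (Multiset.le_iff_subset (univ.nodup.map hw)).mpr fun x hx => ?_
      obtain ⟨i, -, rfl⟩ := Multiset.mem_map.mp hx
      rw [mem_roots (X_pow_sub_C_ne_zero (Nat.pos_of_ne_zero hn) c)]
      simp [hc]
    · rw [Multiset.card_map, card_val, card_univ]
      exact (card_roots' _).trans hdeg.le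
  have hsplit : Splits (X ^ n - C c) := by
    rw [splits_iff_card_roots, ← hroots, hdeg]; simp [n]
  have hcoeff := hsplit.coeff_zero_eq_prod_roots_of_monic (monic_X_pow_sub_C c hn)
  rw [← hroots, hdeg, ← prod_eq_multiset_prod] at hcoeff
  simp only [coeff_sub, coeff_X_pow, coeff_C_zero, Ne.symm hn, if_false] at hcoeff
  have hsq : ((-1 : R) ^ n) ^ 2 = 1 := by rw [← pow_mul, pow_mul', neg_one_sq, one_pow]
  linear_combination -(-1) ^ n * hcoeff - (∏ i, w i) * hsq

theorem cexp_pi_mul_I_div_injOn {n : ℕ} (hn : n ≠ 0) (a : ℝ) :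
    Set.InjOn (fun x : ℝ => cexp (pi * I * x / n)) (Set.Ico a (a + 2 * n)) := by
  intro x hx y hy hexp
  obtain ⟨m, hm⟩ := exp_eq_exp_iff_exists_int.mp hexp
  have hxy : x = y + 2 * n * m := by
    field_simp at hm
    exact_mod_cast (by linear_combination hm : (x : ℂ) = y + 2 * n * m)
  have h2n : (0 : ℝ) < 2 * n := by positivity
  have hm1 : (m : ℝ) < 1 := lt_of_mul_lt_mul_left (by linarith [hx.2, hy.1]) h2n.le
  have hm2 : (-1 : ℝ) < m := lt_of_mul_lt_mul_left (by linarith [hx.1, hy.2]) h2n.le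
  obtain rfl : m = 0 := by
    have : m < 1 := by exact_mod_cast hm1
    have : -1 < m := by exact_mod_cast hm2
    omega
  simpa using hxy

theorem cexp_pi_mul_I_int_add_half_div_pow_two_mul {n : ℕ} (hn : n ≠ 0) (s : ℤ) (k : ℕ) :
    cexp (pi * I * (s + k / 2) / n) ^ (2 * n) = (-1) ^ k := by
  have : (2 * n : ℕ) * (pi * I * (s + k / 2) / n) = s * (2 * pi * I) + k * (pi * I) := by
    push_cast
    field_simp
  rw [← exp_nat_mul, this, exp_add, exp_int_mul_two_pi_mul_I, exp_nat_mul, exp_pi_mul_I, one_mul]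

theorem product_root_pm_one (n : ℕ) (hn : 0 < n) (j : Fin n → ℚ)
    (hmono : StrictMono j)
    (hT : (∃ m : ℕ, n = 2 * m + 1 ∧
            ∀ k, (j k).den = 1 ∧ -(m : ℚ) ≤ j k ∧ j k ≤ 3 * m + 1)
        ∨ (∃ m : ℕ, n = 2 * m ∧
            ∀ k, (∃ t : ℤ, j k = t + 1 / 2) ∧
              -(m : ℚ) + 1 / 2 ≤ j k ∧ j k ≤ 3 * m - 1 / 2))
    (hI : ∀ k l : Fin n, k ≠ l →
        Complex.exp (Real.pi * Complex.I * (j k : ℂ) / (n : ℂ))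
          ≠ -Complex.exp (Real.pi * Complex.I * (j l : ℂ) / (n : ℂ))) :
    (∏ k, Complex.exp (Real.pi * Complex.I * (j k : ℂ) / (n : ℂ))) = 1
    ∨ (∏ k, Complex.exp (Real.pi * Complex.I * (j k : ℂ) / (n : ℂ))) = -1 := by
  obtain ⟨a, hwin, hhalf⟩ : ∃ a : ℚ, (∀ k, j k ∈ Set.Ico a (a + 2 * n)) ∧
      ∀ k, ∃ s : ℤ, j k = s + (n + 1 : ℕ) / 2 := by
    rcases hT with ⟨m, rfl, hj⟩ | ⟨m, rfl, hj⟩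
    · refine ⟨-m, fun k => ⟨(hj k).2.1, ?_⟩, fun k => ⟨(j k).num - m - 1, ?_⟩⟩
      · push_cast; linarith [(hj k).2.2]
      · push_cast; linear_combination -(Rat.coe_int_num_of_den_eq_one (hj k).1)
    · refine ⟨-m + 1 / 2, fun k => ⟨(hj k).2.1, ?_⟩, fun k => ?_⟩
      · push_cast; linarith [(hj k).2.2]
      · obtain ⟨t, ht⟩ := (hj k).1
        exact ⟨t - m, by rw [ht]; push_cast; ring⟩
  set z : Fin n → ℂ := fun k => cexp (pi * I * (j k : ℂ) / n)
  have hwin' : ∀ k, (j k : ℝ) ∈ Set.Ico (a : ℝ) (a + 2 * n) := fun k =>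
    ⟨by exact_mod_cast (hwin k).1, by exact_mod_cast (hwin k).2⟩
  have hz_inj : Function.Injective z := fun k l h =>
    hmono.injective <| Rat.cast_injective (α := ℝ) <| cexp_pi_mul_I_div_injOn hn.ne' a
      (hwin' k) (hwin' l) (by simpa [z] using h)
  have hsq_inj : Function.Injective fun k => z k ^ 2 := fun k l h => by
    by_contra hkl
    exact (sq_eq_sq_iff_eq_or_eq_neg.mp h).elim (hkl ∘ (hz_inj ·)) (hI k l hkl)
  have hsq_pow : ∀ k, (z k ^ 2) ^ Fintype.card (Fin n) = (-1) ^ (n + 1) := fun k => by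
    obtain ⟨s, hs⟩ := hhalf k
    have hs' : (j k : ℂ) = s + (n + 1 : ℕ) / 2 := by rw [hs]; push_cast; ring
    simp only [Fintype.card_fin, ← pow_mul, z, hs',
      cexp_pi_mul_I_int_add_half_div_pow_two_mul hn.ne']
  have : Nonempty (Fin n) := Fin.pos_iff_nonempty.mp hn
  have hprod := prod_eq_neg_one_pow_mul_of_injective_of_pow_card_eq hsq_inj hsq_pow
  rw [Fintype.card_fin, ← pow_add, ← two_mul, pow_mul, neg_one_sq, one_pow, prod_pow] at hprod
  exact sq_eq_one_iff.mp hprod
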